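/- arXiv:2411.08456 — 2 statements merged into one kernel-verified Lean document; each statement's English description precedes it below -/
import Mathlib

section
/- Let d ≥ 2 and let F ⊆ ℝ^{d-1} be a compact convex set with (d-1)-dimensional Lebesgue measure 1. For every compact convex set K ⊆ ℝ^d with floor F, Vol_d(K) = 1, and K ⊆ F × [0,H] for some H ≥ 0 (i.e., K a sub-prism with floor F), one has Q_K(2) ≤ 1 − 1/d. -/
open MeasureTheory Set

noncomputable section

/-- The floor `F ⊆ ℝ^m` embedded into `ℝ^{m+1}` at height `0`, i.e. `F × {0}`. -/
def floorEmb (m : ℕ) (F : Set (Fin m → ℝ)) : Set (Fin (m + 1) → ℝ) :=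
  (fun z => Fin.snoc z (0 : ℝ)) '' F

/-- `K ⊆ ℝ^{m+1}` has floor `F ⊆ ℝ^m`: it lies in the upper half-space and its
intersection with the hyperplane `x_{last} = 0` is `F × {0}`. -/
def HasFloor (m : ℕ) (F : Set (Fin m → ℝ)) (K : Set (Fin (m + 1) → ℝ)) : Prop :=
  K ⊆ {x | 0 ≤ x (Fin.last m)} ∧ K ∩ {x | x (Fin.last m) = 0} = floorEmb m F

/-- `Q_K(2)`: the probability that two independent uniform points `U₁, U₂` of `K`
both lie on the boundary of the convex hull of `{U₁, U₂} ∪ (F × {0})`. -/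
def Qtwo (m : ℕ) (F : Set (Fin m → ℝ)) (K : Set (Fin (m + 1) → ℝ)) : ℝ :=
  (((volume.restrict K).prod (volume.restrict K))
    {p : (Fin (m + 1) → ℝ) × (Fin (m + 1) → ℝ) |
      p.1 ∈ frontier (convexHull ℝ ({p.1, p.2} ∪ floorEmb m F)) ∧
      p.2 ∈ frontier (convexHull ℝ ({p.1, p.2} ∪ floorEmb m F))}).toReal

/-- `L_K(t)`: the `m`-dimensional Lebesgue measure of the horizontal slice of `K`
at height `t`. -/
def layerVol (m : ℕ) (K : Set (Fin (m + 1) → ℝ)) (t : ℝ) : ℝ :=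
  (volume {z : Fin m → ℝ | Fin.snoc z t ∈ K}).toReal

def IsSubPrism (m : ℕ) (F : Set (Fin m → ℝ)) (K : Set (Fin (m + 1) → ℝ)) : Prop :=
  ∃ H : ℝ, 0 ≤ H ∧ K ⊆ {x | Fin.init x ∈ F ∧ x (Fin.last m) ∈ Set.Icc 0 H}

open scoped ENNReal

/-!
For `x ∈ K` at height `h`, the open cone with apex `x` over `interior F × {0}` lies in `K` by
convexity and has volume `h / d`, since its slice at height `s` is a copy of `interior F` scaled by
`(h - s) / h`. If `U₂` lies in the cone of `U₁`, it is an interior point of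
`conv ({U₁, U₂} ∪ F × {0})`, and symmetrically; the two events are disjoint because the cone lies
strictly below its apex. Each has probability `E[height(U)] / d`, and `E[height(U)] ≥ 1/2` because
the horizontal slices of a sub-prism have area at most `vol F = 1`. Hence
`Q_K(2) ≤ 1 - 2 · (1/2) / d`.
-/

section Slices

variable {m : ℕ}

lemma piFinSuccAbove_last_symm_apply (t : ℝ) (z : Fin m → ℝ) :
    (MeasurableEquiv.piFinSuccAbove (fun _ => ℝ) (Fin.last m)).symm (t, z) = Fin.snoc z t := by
  simp [MeasurableEquiv.piFinSuccAbove, Fin.snocEquiv]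

lemma lintegral_eq_lintegral_snoc {f : (Fin (m + 1) → ℝ) → ℝ≥0∞} (hf : Measurable f) :
    ∫⁻ x, f x = ∫⁻ t, ∫⁻ z : Fin m → ℝ, f (Fin.snoc z t) := by
  have e := (volume_preserving_piFinSuccAbove (fun _ : Fin (m + 1) => ℝ) (Fin.last m)).symm
  rw [← e.lintegral_comp hf, Measure.volume_eq_prod, lintegral_prod _ ?_]
  · simp only [piFinSuccAbove_last_symm_apply]
  · exact (hf.comp (MeasurableEquiv.measurable _)).aemeasurable

lemma setLIntegral_comp_last {S : Set (Fin (m + 1) → ℝ)} (hS : MeasurableSet S) {g : ℝ → ℝ≥0∞}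
    (hg : Measurable g) :
    ∫⁻ x in S, g (x (Fin.last m)) = ∫⁻ t, g t * volume {z : Fin m → ℝ | Fin.snoc z t ∈ S} := by
  rw [← lintegral_indicator hS,
    lintegral_eq_lintegral_snoc ((hg.fun_comp (measurable_pi_apply (Fin.last m))).indicator hS)]
  congr 1 with t
  have hslice : MeasurableSet {z : Fin m → ℝ | Fin.snoc z t ∈ S} :=
    (by fun_prop : Measurable fun z : Fin m → ℝ => (Fin.snoc z t : Fin (m + 1) → ℝ)) hS
  refine .trans ?_ (lintegral_indicator_const hslice (g t))
  congr 1 with z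
  by_cases h : Fin.snoc z t ∈ S <;> simp [h]

lemma volume_eq_lintegral_volume_slice {S : Set (Fin (m + 1) → ℝ)} (hS : MeasurableSet S) :
    volume S = ∫⁻ t, volume {z : Fin m → ℝ | Fin.snoc z t ∈ S} := by
  simpa using setLIntegral_comp_last hS (g := fun _ => 1) measurable_const

end Slices

lemma lintegral_Icc_one_sub :
    ∫⁻ t in Icc (0 : ℝ) 1, ENNReal.ofReal (1 - t) = ENNReal.ofReal (1 / 2) := by
  rw [← ofReal_integral_eq_lintegral_ofReal, integral_Icc_eq_integral_Ioc,
    ← intervalIntegral.integral_of_le zero_le_one]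
  · rw [intervalIntegral.integral_sub intervalIntegrable_const
      intervalIntegral.intervalIntegrable_id, integral_id]
    norm_num
  · exact (continuous_const.sub continuous_id).integrableOn_Icc
  · filter_upwards [ae_restrict_mem measurableSet_Icc] with t ht
    exact sub_nonneg.2 ht.2

lemma le_ofReal_mul_add_indicator {L : ℝ≥0∞} {t : ℝ} (hL1 : L ≤ 1) (hL0 : t < 0 → L = 0) :
    L ≤ ENNReal.ofReal t * L + (Icc 0 1).indicator (fun t => ENNReal.ofReal (1 - t)) t := by
  rcases lt_or_ge t 0 with ht | ht
  · simp [hL0 ht]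
  rcases le_or_gt t 1 with ht1 | ht1
  · rw [indicator_of_mem (mem_Icc.2 ⟨ht, ht1⟩)]
    calc L = (ENNReal.ofReal t + ENNReal.ofReal (1 - t)) * L := by
          rw [← ENNReal.ofReal_add ht (sub_nonneg.2 ht1), add_sub_cancel, ENNReal.ofReal_one,
            one_mul]
      _ ≤ ENNReal.ofReal t * L + ENNReal.ofReal (1 - t) := by
          rw [add_mul]; gcongr; exact mul_le_of_le_one_right' hL1
  · calc L ≤ ENNReal.ofReal t * L := le_mul_of_one_le_left' (ENNReal.one_le_ofReal.2 ht1.le)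
      _ ≤ _ := le_self_add

lemma ofReal_half_le_lintegral_ofReal_mul {L : ℝ → ℝ≥0∞} (hL1 : ∀ t, L t ≤ 1)
    (hL0 : ∀ t < 0, L t = 0) (hL : ∫⁻ t, L t = 1) :
    ENNReal.ofReal (1 / 2) ≤ ∫⁻ t, ENNReal.ofReal t * L t := by
  have hmass : 1 ≤ (∫⁻ t, ENNReal.ofReal t * L t) + ENNReal.ofReal (1 / 2) :=
    calc 1 = ∫⁻ t, L t := hL.symm
      _ ≤ ∫⁻ t, (ENNReal.ofReal t * L t +
            (Icc 0 1).indicator (fun t => ENNReal.ofReal (1 - t)) t) :=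
          lintegral_mono fun t => le_ofReal_mul_add_indicator (hL1 t) (hL0 t)
      _ = _ := by
          rw [lintegral_add_right _
              ((by fun_prop : Measurable fun t : ℝ => ENNReal.ofReal (1 - t)).indicator
                measurableSet_Icc),
            lintegral_indicator measurableSet_Icc, lintegral_Icc_one_sub]
  calc ENNReal.ofReal (1 / 2) = 1 - ENNReal.ofReal (1 / 2) := by
        rw [← ENNReal.ofReal_one, ← ENNReal.ofReal_sub _ (by norm_num)]; norm_num
    _ ≤ _ := tsub_le_iff_right.2 hmass

section Cone

variable {m : ℕ} {F : Set (Fin m → ℝ)}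

/-- The floor coordinates of the point where the line through `x` and `y` meets `x_{last} = 0`. -/
def floorProj (x y : Fin (m + 1) → ℝ) : Fin m → ℝ :=
  (x (Fin.last m) - y (Fin.last m))⁻¹ •
    (x (Fin.last m) • Fin.init y - y (Fin.last m) • Fin.init x)

/-- The open cone with apex `x` over `interior F × {0}`, without its apex and base. -/
def floorCone (F : Set (Fin m → ℝ)) (x : Fin (m + 1) → ℝ) : Set (Fin (m + 1) → ℝ) :=
  {y | 0 < y (Fin.last m) ∧ y (Fin.last m) < x (Fin.last m) ∧ floorProj x y ∈ interior F}

lemma continuousOn_floorProj :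
    ContinuousOn (fun p : (Fin (m + 1) → ℝ) × (Fin (m + 1) → ℝ) => floorProj p.1 p.2)
      {p | p.2 (Fin.last m) < p.1 (Fin.last m)} := by
  have hinit : Continuous (Fin.init : (Fin (m + 1) → ℝ) → Fin m → ℝ) :=
    continuous_pi fun i => continuous_apply _
  unfold floorProj
  refine ContinuousOn.fun_smul ?_ (Continuous.continuousOn (by fun_prop))
  exact ContinuousOn.inv₀ (by fun_prop) fun p hp => sub_ne_zero.2 (ne_of_gt hp)

lemma isOpen_setOf_mem_floorCone :
    IsOpen {p : (Fin (m + 1) → ℝ) × (Fin (m + 1) → ℝ) | p.2 ∈ floorCone F p.1} := by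
  have hlt : IsOpen {p : (Fin (m + 1) → ℝ) × (Fin (m + 1) → ℝ) |
      p.2 (Fin.last m) < p.1 (Fin.last m)} := isOpen_lt (by fun_prop) (by fun_prop)
  have hpos : IsOpen {p : (Fin (m + 1) → ℝ) × (Fin (m + 1) → ℝ) | 0 < p.2 (Fin.last m)} :=
    isOpen_lt continuous_const (by fun_prop)
  convert hpos.inter
    (continuousOn_floorProj.isOpen_inter_preimage hlt (isOpen_interior (s := F))) using 1
  ext p
  simp only [floorCone, mem_ofPred_eq, mem_inter_iff, mem_preimage]

lemma isOpen_floorCone (x : Fin (m + 1) → ℝ) : IsOpen (floorCone F x) :=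
  isOpen_setOf_mem_floorCone.preimage (Continuous.prodMk_right x)

lemma floorProj_spec {x y : Fin (m + 1) → ℝ} (hx : x (Fin.last m) ≠ 0)
    (hxy : y (Fin.last m) ≠ x (Fin.last m)) :
    (y (Fin.last m) / x (Fin.last m)) • x +
      (1 - y (Fin.last m) / x (Fin.last m)) • (Fin.snoc (floorProj x y) 0 : Fin (m + 1) → ℝ) =
        y := by
  have hxy' : x (Fin.last m) - y (Fin.last m) ≠ 0 := sub_ne_zero.2 hxy.symm
  funext i
  induction i using Fin.lastCases with
  | last => simp [floorProj, hx]
  | cast i =>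
    simp only [floorProj, Pi.add_apply, Pi.smul_apply, Pi.sub_apply, Fin.snoc_castSucc,
      Fin.init, smul_eq_mul]
    field_simp
    ring

lemma floorCone_subset_convexHull (x : Fin (m + 1) → ℝ) :
    floorCone F x ⊆ convexHull ℝ ({x} ∪ floorEmb m F) := by
  rintro y ⟨hy0, hyx, hproj⟩
  have hx0 : 0 < x (Fin.last m) := hy0.trans hyx
  have hseg : y ∈ segment ℝ x (Fin.snoc (floorProj x y) 0) :=
    ⟨_, _, by positivity, sub_nonneg.2 ((div_le_one hx0).2 hyx.le), add_sub_cancel _ _,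
      floorProj_spec hx0.ne' hyx.ne⟩
  have hbase : (Fin.snoc (floorProj x y) 0 : Fin (m + 1) → ℝ) ∈ floorEmb m F :=
    mem_image_of_mem _ (interior_subset hproj)
  exact segment_subset_convexHull (mem_union_left _ (mem_singleton x))
    (mem_union_right _ hbase) hseg

lemma floorCone_subset_interior_convexHull {A : Set (Fin (m + 1) → ℝ)} {x : Fin (m + 1) → ℝ}
    (hx : x ∈ A) : floorCone F x ⊆ interior (convexHull ℝ (A ∪ floorEmb m F)) :=
  interior_maximal ((floorCone_subset_convexHull x).trans
    (convexHull_mono (union_subset_union_left _ (singleton_subset_iff.2 hx)))) (isOpen_floorCone x)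

lemma floorProj_snoc (x : Fin (m + 1) → ℝ) (z : Fin m → ℝ) (s : ℝ) :
    floorProj x (Fin.snoc z s) =
      (x (Fin.last m) / (x (Fin.last m) - s)) • z + (s / (s - x (Fin.last m))) • Fin.init x := by
  ext i
  simp only [floorProj, Fin.init_snoc, Fin.snoc_last, Pi.smul_apply, Pi.sub_apply, Pi.add_apply,
    smul_eq_mul]
  rw [div_eq_mul_inv, div_eq_mul_inv, ← neg_sub (x (Fin.last m)) s, inv_neg]
  ring

lemma volume_slice_floorCone {x : Fin (m + 1) → ℝ} {s : ℝ} (hs : 0 < s)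
    (hsx : s < x (Fin.last m)) :
    volume {z : Fin m → ℝ | Fin.snoc z s ∈ floorCone F x} =
      ENNReal.ofReal (((x (Fin.last m) - s) / x (Fin.last m)) ^ m) * volume (interior F) := by
  set t := x (Fin.last m)
  have hslice : {z : Fin m → ℝ | Fin.snoc z s ∈ floorCone F x} =
      ((t / (t - s)) • ·) ⁻¹' ((· + (s / (s - t)) • Fin.init x) ⁻¹' interior F) := by
    ext z
    simp [floorCone, floorProj_snoc, hs, hsx, t]
  have hts : 0 < t - s := sub_pos.2 hsx
  rw [hslice, Measure.addHaar_preimage_smul volume (div_pos (hs.trans hsx) hts).ne',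
    measure_preimage_add_right, Module.finrank_fin_fun, ← inv_pow, inv_div,
    abs_of_nonneg (pow_nonneg (div_nonneg hts.le (hs.trans hsx).le) m)]

lemma lintegral_Ioo_ofReal_pow {t : ℝ} (ht : 0 < t) (m : ℕ) :
    ∫⁻ s in Ioo 0 t, ENNReal.ofReal (((t - s) / t) ^ m) = ENNReal.ofReal (t / (m + 1)) := by
  rw [← ofReal_integral_eq_lintegral_ofReal, ← integral_Ioc_eq_integral_Ioo,
    ← intervalIntegral.integral_of_le ht.le,
    intervalIntegral.integral_comp_sub_left (fun u => (u / t) ^ m) t]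
  · simp only [sub_self, sub_zero, div_pow, intervalIntegral.integral_div, integral_pow]
    congr 1
    field_simp
    ring
  · exact (Continuous.integrableOn_Icc (by fun_prop)).mono_set Ioo_subset_Icc_self
  · filter_upwards [ae_restrict_mem measurableSet_Ioo] with s hs
    have : 0 ≤ t - s := sub_nonneg.2 hs.2.le
    positivity

lemma ofReal_mul_volume_interior_le_volume_floorCone (x : Fin (m + 1) → ℝ) :
    ENNReal.ofReal (x (Fin.last m) / (m + 1)) * volume (interior F) ≤ volume (floorCone F x) := by
  set t := x (Fin.last m)
  rcases le_or_gt t 0 with ht | ht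
  · have hm : (0 : ℝ) ≤ m + 1 := by positivity
    simp [ENNReal.ofReal_of_nonpos (div_nonpos_of_nonpos_of_nonneg ht hm)]
  calc ENNReal.ofReal (t / (m + 1)) * volume (interior F)
      = ∫⁻ s in Ioo 0 t, ENNReal.ofReal (((t - s) / t) ^ m) * volume (interior F) := by
        rw [lintegral_mul_const _ (by fun_prop), lintegral_Ioo_ofReal_pow ht]
    _ = ∫⁻ s in Ioo 0 t, volume {z : Fin m → ℝ | Fin.snoc z s ∈ floorCone F x} :=
        setLIntegral_congr_fun measurableSet_Ioo fun s hs => (volume_slice_floorCone hs.1 hs.2).symm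
    _ ≤ ∫⁻ s, volume {z : Fin m → ℝ | Fin.snoc z s ∈ floorCone F x} :=
        setLIntegral_le_lintegral _ _
    _ = volume (floorCone F x) :=
        (volume_eq_lintegral_volume_slice (isOpen_floorCone x).measurableSet).symm

end Cone

lemma MeasureTheory.Measure.prod_union_preimage_swap {α : Type*} [MeasurableSpace α]
    {μ : Measure α} [SFinite μ] {S : Set (α × α)} (hS : MeasurableSet S)
    (hd : Disjoint S (Prod.swap ⁻¹' S)) :
    (μ.prod μ) (S ∪ Prod.swap ⁻¹' S) = 2 * (μ.prod μ) S := by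
  rw [measure_union hd (hS.preimage measurable_swap), ← Measure.map_apply measurable_swap hS,
    Measure.prod_swap, two_mul]

lemma MeasureTheory.Measure.real_prod_le_one_sub_two_mul {α : Type*} [MeasurableSpace α]
    {μ : Measure α} [IsProbabilityMeasure μ] {S Q : Set (α × α)} (hS : MeasurableSet S)
    (hd : Disjoint S (Prod.swap ⁻¹' S)) (hQ : Q ⊆ (S ∪ Prod.swap ⁻¹' S)ᶜ) :
    (μ.prod μ).real Q ≤ 1 - 2 * (μ.prod μ).real S :=
  calc (μ.prod μ).real Q ≤ (μ.prod μ).real (S ∪ Prod.swap ⁻¹' S)ᶜ := measureReal_mono hQ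
    _ = 1 - 2 * (μ.prod μ).real S := by
      rw [probReal_compl_eq_one_sub (hS.union (hS.preimage measurable_swap)), measureReal_def,
        Measure.prod_union_preimage_swap hS hd, ENNReal.toReal_mul, measureReal_def]
      simp

section SubPrism

variable {m : ℕ} {F : Set (Fin m → ℝ)} {K : Set (Fin (m + 1) → ℝ)}

lemma HasFloor.floorEmb_subset (h : HasFloor m F K) : floorEmb m F ⊆ K :=
  h.2 ▸ inter_subset_left

lemma floorCone_subset_of_mem {x : Fin (m + 1) → ℝ} (hK : Convex ℝ K) (hFK : floorEmb m F ⊆ K)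
    (hx : x ∈ K) : floorCone F x ⊆ K :=
  (floorCone_subset_convexHull x).trans
    (convexHull_min (union_subset (singleton_subset_iff.2 hx) hFK) hK)

lemma IsSubPrism.ofReal_half_le_setLIntegral_last (hK : IsSubPrism m F K)
    (hKm : MeasurableSet K) (hF : volume F ≤ 1) (hKvol : volume K = 1) :
    ENNReal.ofReal (1 / 2) ≤ ∫⁻ x in K, ENNReal.ofReal (x (Fin.last m)) := by
  obtain ⟨H, -, hKH⟩ := hK
  rw [setLIntegral_comp_last hKm ENNReal.measurable_ofReal]
  refine ofReal_half_le_lintegral_ofReal_mul (fun t => ?_) (fun t ht => ?_) ?_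
  · refine (measure_mono fun z hz => ?_).trans hF
    simpa using (hKH hz).1
  · refine measure_eq_zero_iff_ae_notMem.2 (ae_of_all _ fun z hz => ?_)
    simpa using ht.trans_le (hKH hz).2.1
  · rw [← volume_eq_lintegral_volume_slice hKm, hKvol]

lemma ofReal_le_prod_setOf_mem_floorCone (hF : Convex ℝ F) (hFvol : volume F = 1)
    (hKm : MeasurableSet K) (hKconv : Convex ℝ K) (hFK : floorEmb m F ⊆ K)
    (hKsub : IsSubPrism m F K) (hKvol : volume K = 1) :
    ENNReal.ofReal (1 / (2 * (m + 1))) ≤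
      ((volume.restrict K).prod (volume.restrict K)) {p | p.2 ∈ floorCone F p.1} := by
  have hint : volume (interior F) = 1 := by
    rw [measure_interior_of_null_frontier (hF.addHaar_frontier volume), hFvol]
  have hcone : ∀ x ∈ K, ENNReal.ofReal (x (Fin.last m)) * ENNReal.ofReal ((m + 1)⁻¹) ≤
      volume.restrict K (floorCone F x) := fun x hx => by
    rw [Measure.restrict_eq_self _ (floorCone_subset_of_mem hKconv hFK hx),
      ← ENNReal.ofReal_mul' (by positivity), ← div_eq_mul_inv]
    simpa [hint] using ofReal_mul_volume_interior_le_volume_floorCone (F := F) x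
  rw [Measure.prod_apply isOpen_setOf_mem_floorCone.measurableSet]
  calc ENNReal.ofReal (1 / (2 * (m + 1)))
      = ENNReal.ofReal (1 / 2) * ENNReal.ofReal ((m + 1)⁻¹) := by
        rw [← ENNReal.ofReal_mul (by norm_num)]
        congr 1
        field_simp
    _ ≤ (∫⁻ x in K, ENNReal.ofReal (x (Fin.last m))) * ENNReal.ofReal ((m + 1)⁻¹) := by
        gcongr
        exact hKsub.ofReal_half_le_setLIntegral_last hKm hFvol.le hKvol
    _ = ∫⁻ x in K, ENNReal.ofReal (x (Fin.last m)) * ENNReal.ofReal ((m + 1)⁻¹) :=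
        (lintegral_mul_const _ (by fun_prop)).symm
    _ ≤ ∫⁻ x in K, volume.restrict K (floorCone F x) := setLIntegral_mono' hKm hcone

end SubPrism

theorem stmt2_general (m : ℕ) (F : Set (Fin m → ℝ))
    (hFconv : Convex ℝ F) (hFvol : volume F = 1)
    (K : Set (Fin (m + 1) → ℝ)) (hKcomp : IsCompact K) (hKconv : Convex ℝ K)
    (hKfloor : HasFloor m F K) (hKvol : volume K = 1)
    (hKsub : IsSubPrism m F K) :
    Qtwo m F K ≤ 1 - 1 / ((m : ℝ) + 1) := by
  have : IsProbabilityMeasure (volume.restrict K) := ⟨by simp [hKvol]⟩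
  have hS := isOpen_setOf_mem_floorCone (F := F).measurableSet
  have hdisj : Disjoint {p | p.2 ∈ floorCone F p.1} (Prod.swap ⁻¹' {p | p.2 ∈ floorCone F p.1}) :=
    disjoint_left.2 fun p h h' => lt_asymm h.2.1 h'.2.1
  have hQ : {p : (Fin (m + 1) → ℝ) × (Fin (m + 1) → ℝ) |
      p.1 ∈ frontier (convexHull ℝ ({p.1, p.2} ∪ floorEmb m F)) ∧
      p.2 ∈ frontier (convexHull ℝ ({p.1, p.2} ∪ floorEmb m F))} ⊆
      ({p | p.2 ∈ floorCone F p.1} ∪ Prod.swap ⁻¹' {p | p.2 ∈ floorCone F p.1})ᶜ := by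
    rintro p ⟨h₁, h₂⟩ (h | h)
    · exact h₂.2 (floorCone_subset_interior_convexHull (mem_insert _ _) h)
    · exact h₁.2 (floorCone_subset_interior_convexHull (x := p.2)
        (mem_insert_of_mem _ (mem_singleton _)) h)
  have hcone := (ENNReal.ofReal_le_iff_le_toReal (measure_ne_top _ _)).1
    (ofReal_le_prod_setOf_mem_floorCone hFconv hFvol hKcomp.isClosed.measurableSet hKconv
      hKfloor.floorEmb_subset hKsub hKvol)
  have htwice : 2 * (1 / (2 * ((m : ℝ) + 1))) = 1 / ((m : ℝ) + 1) := by field_simp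
  calc Qtwo m F K ≤ 1 - 2 * ((volume.restrict K).prod (volume.restrict K)).real
        {p | p.2 ∈ floorCone F p.1} := Measure.real_prod_le_one_sub_two_mul hS hdisj hQ
    _ ≤ 1 - 1 / ((m : ℝ) + 1) := by rw [← htwice, measureReal_def]; gcongr

/-- For a sub-prism `K` with floor `F` and volume `1`, `Q_K(2) ≤ 1 - 1/d`. -/
theorem stmt2 (m : ℕ) (hm : 1 ≤ m) (F : Set (Fin m → ℝ))
    (hFcomp : IsCompact F) (hFconv : Convex ℝ F) (hFvol : volume F = 1)
    (K : Set (Fin (m + 1) → ℝ)) (hKcomp : IsCompact K) (hKconv : Convex ℝ K)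
    (hKfloor : HasFloor m F K) (hKvol : volume K = 1)
    (hKsub : IsSubPrism m F K) :
    Qtwo m F K ≤ 1 - 1 / ((m : ℝ) + 1) :=
  stmt2_general m F hFconv hFvol K hKcomp hKconv hKfloor hKvol hKsub
end
end

section
/- Let d ≥ 2 and let F ⊆ ℝ^{d-1} be a compact convex set with (d-1)-dimensional Lebesgue measure 1. For every α > 0 there exists a compact convex set K ⊆ ℝ^d with floor F and Vol_d(K) = 1 such that Q_K(2) ≥ 1 − α. -/
/-!
Take for `K` a thin frustum: the convex join of `F × {0}` and `(c • F) × {h}` with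
`h ≤ α / 2`, where `c ≥ 1` is chosen by the intermediate value theorem so that `vol K = 1`.
If `U₂` avoids the cone `conv ({U₁} ∪ F × {0})`, a hyperplane separating `U₂` from that cone
supports `conv ({U₁, U₂} ∪ F × {0})` at `U₂`, so `U₂` is a boundary point; symmetrically for
`U₁`. A cone with apex at height `t ≤ h` has volume at most `t · vol F ≤ h`, so by Fubini the
bad event has probability at most `2 h ≤ α`.
-/

open MeasureTheory Set

noncomputable section

open Pointwise Filter Topology

section ConvexGeometry

variable {E : Type*} [AddCommGroup E] [Module ℝ E] [TopologicalSpace E]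
  [IsTopologicalAddGroup E] [ContinuousSMul ℝ E]

lemma notMem_interior_of_forall_le {f : E →L[ℝ] ℝ} {s : Set E} {p v : E}
    (hs : ∀ x ∈ s, f x ≤ f p) (hv : 0 < f v) : p ∉ interior s := by
  intro hp
  have hray : ∀ᶠ t : ℝ in 𝓝 0, p + t • v ∈ s :=
    (by fun_prop : Continuous fun t : ℝ => p + t • v).continuousAt.preimage_mem_nhds
      (by simpa using mem_interior_iff_mem_nhds.1 hp)
  obtain ⟨t, hts, ht⟩ :=
    ((eventually_nhdsWithin_of_eventually_nhds hray).and (self_mem_nhdsWithin (s := Ioi 0))).exists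
  have := hs _ hts
  rw [map_add, map_smul, smul_eq_mul] at this
  linarith [mul_pos (mem_Ioi.1 ht) hv]

lemma isCompact_convexJoin {A B : Set E} (hA : IsCompact A) (hB : IsCompact B) :
    IsCompact (convexJoin ℝ A B) := by
  have : convexJoin ℝ A B
      = (fun q : ℝ × E × E => (1 - q.1) • q.2.1 + q.1 • q.2.2) '' (Icc 0 1 ×ˢ A ×ˢ B) := by
    ext x
    simp only [mem_convexJoin, segment_eq_image, mem_image, Prod.exists, mem_prod]
    aesop
  rw [this]
  exact (isCompact_Icc.prod (hA.prod hB)).image (by fun_prop)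

lemma isCompact_setOf_mem_convexJoin_singleton {K S : Set E} (hK : IsCompact K)
    (hS : IsCompact S) : IsCompact {p : E × E | p.1 ∈ K ∧ p.2 ∈ convexJoin ℝ {p.1} S} := by
  have : {p : E × E | p.1 ∈ K ∧ p.2 ∈ convexJoin ℝ {p.1} S}
      = (fun q : E × ℝ × E => (q.1, (1 - q.2.1) • q.1 + q.2.1 • q.2.2)) ''
          (K ×ˢ Icc 0 1 ×ˢ S) := by
    ext ⟨x, y⟩
    simp only [convexJoin_singleton_left, segment_eq_image, mem_ofPred_eq, mem_iUnion,
      mem_image, Prod.exists, mem_prod, Prod.mk.injEq, exists_prop]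
    aesop
  rw [this]
  exact (hK.prod (isCompact_Icc.prod hS)).image (by fun_prop)

variable [LocallyConvexSpace ℝ E]

lemma mem_frontier_convexHull_insert {p : E} {s : Set E} (hs : s.Nonempty)
    (hclosed : IsClosed (convexHull ℝ s)) (hp : p ∉ convexHull ℝ s) :
    p ∈ frontier (convexHull ℝ (insert p s)) := by
  obtain ⟨f, u, hfs, hup⟩ :=
    geometric_hahn_banach_closed_point (convex_convexHull ℝ s) hclosed hp
  obtain ⟨q, hq⟩ := hs
  have hle : convexHull ℝ (insert p s) ⊆ {x | f x ≤ f p} :=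
    convexHull_min
      (insert_subset (le_refl (f p)) fun x hx => (hfs x (subset_convexHull ℝ s hx)).le.trans hup.le)
      (convex_halfSpace_le f.isLinear (f p))
  refine ⟨subset_closure (subset_convexHull ℝ _ (mem_insert p s)),
    notMem_interior_of_forall_le (v := p - q) hle ?_⟩
  have := hfs q (subset_convexHull ℝ s hq)
  rw [map_sub]
  linarith

end ConvexGeometry

section Slices

variable {m : ℕ}

def atHeight (t : ℝ) (A : Set (Fin m → ℝ)) : Set (Fin (m + 1) → ℝ) :=
  (fun z => Fin.snoc z t) '' A

lemma floorEmb_eq_atHeight (F : Set (Fin m → ℝ)) : floorEmb m F = atHeight 0 F := rfl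

lemma smul_snoc_add_smul_snoc (a b : ℝ) (z z' : Fin m → ℝ) (t t' : ℝ) :
    a • (Fin.snoc z t : Fin (m + 1) → ℝ) + b • Fin.snoc z' t'
      = Fin.snoc (a • z + b • z') (a * t + b * t') := by
  funext i
  induction i using Fin.lastCases <;> simp

variable {A B : Set (Fin m → ℝ)} {t h : ℝ}

lemma IsCompact.atHeight (hA : IsCompact A) : IsCompact (atHeight t A) :=
  hA.image (continuous_id.finSnoc (A := fun _ => ℝ) continuous_const)

lemma Convex.atHeight (hA : Convex ℝ A) : Convex ℝ (atHeight t A) := by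
  rintro _ ⟨z, hz, rfl⟩ _ ⟨z', hz', rfl⟩ a b ha hb hab
  refine ⟨a • z + b • z', hA hz hz' ha hb hab, ?_⟩
  rw [smul_snoc_add_smul_snoc, ← add_mul, hab, one_mul]

lemma mem_convexJoin_atHeight_iff {x : Fin (m + 1) → ℝ} :
    x ∈ convexJoin ℝ (atHeight 0 A) (atHeight h B) ↔
      ∃ b ∈ Icc (0 : ℝ) 1, ∃ u ∈ A, ∃ v ∈ B, x = Fin.snoc ((1 - b) • u + b • v) (b * h) := by
  rw [mem_convexJoin]
  constructor
  · rintro ⟨_, ⟨u, hu, rfl⟩, _, ⟨v, hv, rfl⟩, a, b, ha, hb, hab, rfl⟩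
    obtain rfl : a = 1 - b := by linarith
    exact ⟨b, ⟨hb, by linarith⟩, u, hu, v, hv, by rw [smul_snoc_add_smul_snoc]; simp⟩
  · rintro ⟨b, ⟨hb0, hb1⟩, u, hu, v, hv, rfl⟩
    refine ⟨_, ⟨u, hu, rfl⟩, _, ⟨v, hv, rfl⟩, 1 - b, b, by linarith, hb0, by ring, ?_⟩
    rw [smul_snoc_add_smul_snoc]
    simp

lemma last_mem_Icc_of_mem_convexJoin_atHeight (hh : 0 ≤ h) {x : Fin (m + 1) → ℝ}
    (hx : x ∈ convexJoin ℝ (atHeight 0 A) (atHeight h B)) : x (Fin.last m) ∈ Icc 0 h := by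
  obtain ⟨b, ⟨hb0, hb1⟩, u, -, v, -, rfl⟩ := mem_convexJoin_atHeight_iff.1 hx
  simp only [Fin.snoc_last]
  exact ⟨mul_nonneg hb0 hh, mul_le_of_le_one_left hh hb1⟩

lemma slice_convexJoin_atHeight (hh : 0 < h) {s : ℝ} (hs : s ∈ Icc 0 h) :
    {z : Fin m → ℝ |
        (Fin.snoc z s : Fin (m + 1) → ℝ) ∈ convexJoin ℝ (atHeight 0 A) (atHeight h B)} =
      (1 - s / h) • A + (s / h) • B := by
  ext z
  simp only [mem_ofPred_eq, mem_convexJoin_atHeight_iff, Fin.snoc_inj]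
  constructor
  · rintro ⟨b, -, u, hu, v, hv, rfl, hs⟩
    obtain rfl : b = s / h := by field_simp; linarith
    exact add_mem_add (smul_mem_smul_set hu) (smul_mem_smul_set hv)
  · rintro ⟨_, ⟨u, hu, rfl⟩, _, ⟨v, hv, rfl⟩, rfl⟩
    refine ⟨s / h, ⟨div_nonneg hs.1 hh.le, div_le_one_of_le₀ hs.2 hh.le⟩, u, hu, v, hv, rfl,
      ?_⟩
    field_simp

lemma hasFloor_convexJoin_atHeight (hh : 0 < h) (hB : B.Nonempty) :
    HasFloor m A (convexJoin ℝ (atHeight 0 A) (atHeight h B)) := by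
  refine ⟨fun x hx => (last_mem_Icc_of_mem_convexJoin_atHeight hh.le hx).1, ?_⟩
  ext x
  simp only [mem_inter_iff, mem_ofPred_eq, mem_convexJoin_atHeight_iff]
  constructor
  · rintro ⟨⟨b, -, u, hu, v, -, rfl⟩, hx0⟩
    obtain rfl : b = 0 := by simpa [hh.ne'] using hx0
    exact ⟨u, hu, by simp⟩
  · rintro ⟨u, hu, rfl⟩
    obtain ⟨v, hv⟩ := hB
    exact ⟨⟨0, ⟨le_rfl, zero_le_one⟩, u, hu, v, hv, by simp⟩, by simp⟩

lemma volume_eq_lintegral_slice {S : Set (Fin (m + 1) → ℝ)} (hS : MeasurableSet S) :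
    volume S = ∫⁻ t : ℝ, volume {z : Fin m → ℝ | (Fin.snoc z t : Fin (m + 1) → ℝ) ∈ S} := by
  have e := (volume_preserving_piFinSuccAbove (fun _ : Fin (m + 1) => ℝ) (Fin.last m)).symm
  rw [← e.measure_preimage hS.nullMeasurableSet]
  have hpre :
      (MeasurableEquiv.piFinSuccAbove (fun _ : Fin (m + 1) => ℝ) (Fin.last m)).symm ⁻¹' S =
        {p : ℝ × (Fin m → ℝ) | (Fin.snoc p.2 p.1 : Fin (m + 1) → ℝ) ∈ S} := by
    ext p
    simp [MeasurableEquiv.piFinSuccAbove, Fin.snocEquiv]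
  rw [hpre, Measure.volume_eq_prod, Measure.prod_apply]
  · rfl
  · exact (continuous_snd.finSnoc (A := fun _ => ℝ) continuous_fst).measurable hS

lemma volume_convexJoin_atHeight (hh : 0 < h) (hA : IsCompact A) (hB : IsCompact B) :
    volume (convexJoin ℝ (atHeight 0 A) (atHeight h B))
      = ∫⁻ s in Icc 0 h, volume ((1 - s / h) • A + (s / h) • B) := by
  rw [volume_eq_lintegral_slice (isCompact_convexJoin hA.atHeight hB.atHeight).measurableSet,
    ← lintegral_indicator measurableSet_Icc]
  congr 1 with s
  by_cases hs : s ∈ Icc 0 h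
  · rw [slice_convexJoin_atHeight hh hs, indicator_of_mem hs]
  · rw [indicator_of_notMem hs]
    convert measure_empty (μ := volume)
    exact eq_empty_of_forall_notMem fun z hz =>
      hs (by simpa using last_mem_Icc_of_mem_convexJoin_atHeight hh.le hz)

end Slices

section Cones

variable {m : ℕ} {F : Set (Fin m → ℝ)}

lemma volume_smul_add_singleton (r : ℝ) (A : Set (Fin m → ℝ)) (v : Fin m → ℝ) :
    volume (r • A + {v}) = ENNReal.ofReal (|r| ^ m) * volume A := by
  rw [add_singleton, image_add_right, measure_preimage_add_right, Measure.addHaar_smul,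
    Module.finrank_fin_fun, abs_pow]

lemma convexHull_insert_floorEmb (hFc : Convex ℝ F) (hFne : F.Nonempty) (x : Fin (m + 1) → ℝ) :
    convexHull ℝ (insert x (floorEmb m F)) = convexJoin ℝ {x} (floorEmb m F) := by
  rw [floorEmb_eq_atHeight, convexHull_insert (s := atHeight 0 F) (hFne.image _),
    hFc.atHeight.convexHull_eq]

lemma volume_convexJoin_floorEmb_le (hF : IsCompact F) (hFc : Convex ℝ F) (hFne : F.Nonempty)
    {x : Fin (m + 1) → ℝ} (hx : 0 ≤ x (Fin.last m)) :
    volume (convexJoin ℝ {x} (floorEmb m F)) ≤ volume F * ENNReal.ofReal (x (Fin.last m)) := by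
  rcases hx.eq_or_lt with h0 | h0
  · have hflat : convexJoin ℝ {x} (floorEmb m F) ⊆ {y | y (Fin.last m) = 0} := by
      rw [← convexHull_insert_floorEmb hFc hFne]
      exact convexHull_min (insert_subset h0.symm (by rintro _ ⟨z, -, rfl⟩; simp))
        (convex_hyperplane (LinearMap.proj (R := ℝ) (φ := fun _ => ℝ) (Fin.last m)).isLinear 0)
    exact (measure_mono_null hflat (Measure.pi_hyperplane _ (Fin.last m) 0)).trans_le zero_le
  · have hapex : {x} = atHeight (x (Fin.last m)) {Fin.init x} := by
      rw [atHeight, image_singleton, Fin.snoc_init_self]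
    rw [convexJoin_comm, hapex, floorEmb_eq_atHeight,
      volume_convexJoin_atHeight h0 hF isCompact_singleton]
    calc ∫⁻ s in Icc 0 (x (Fin.last m)),
          volume ((1 - s / x (Fin.last m)) • F + (s / x (Fin.last m)) • {Fin.init x})
        ≤ ∫⁻ _ in Icc 0 (x (Fin.last m)), volume F := by
          refine setLIntegral_mono' measurableSet_Icc fun s ⟨hs0, hs⟩ => ?_
          rw [smul_set_singleton, volume_smul_add_singleton]
          refine mul_le_of_le_one_left zero_le (ENNReal.ofReal_le_one.2 ?_)
          have : s / x (Fin.last m) ≤ 1 := div_le_one_of_le₀ hs h0.le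
          have : 0 ≤ s / x (Fin.last m) := div_nonneg hs0 h0.le
          exact pow_le_one₀ (abs_nonneg _) (abs_le.2 ⟨by linarith, by linarith⟩)
      _ = volume F * ENNReal.ofReal (x (Fin.last m)) := by
          rw [setLIntegral_const, Real.volume_Icc, sub_zero]

end Cones

section Frustum

variable {m : ℕ} {F : Set (Fin m → ℝ)} {h c : ℝ}

def frustum (h c : ℝ) (F : Set (Fin m → ℝ)) : Set (Fin (m + 1) → ℝ) :=
  convexJoin ℝ (atHeight 0 F) (atHeight h (c • F))

def frustumVolume (m : ℕ) (h c : ℝ) : ℝ :=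
  ∫ s in 0..h, (1 + s / h * (c - 1)) ^ m

lemma continuous_frustumVolume : Continuous (frustumVolume m h) :=
  intervalIntegral.continuous_parametric_intervalIntegral_of_continuous' (by fun_prop) _ _

lemma frustumVolume_one : frustumVolume m h 1 = h := by
  simp [frustumVolume]

lemma le_frustumVolume (hm : m ≠ 0) (hh : 0 < h) (hc : 1 ≤ c) :
    h * (c + 1) / 2 ≤ frustumVolume m h c := by
  have hlin : ∫ s in 0..h, (1 + s / h * (c - 1)) = h * (c + 1) / 2 := by
    have hcont : Continuous fun s : ℝ => (c - 1) / h * s := by fun_prop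
    simp_rw [show ∀ s, s / h * (c - 1) = (c - 1) / h * s from fun s => by ring]
    rw [intervalIntegral.integral_add intervalIntegrable_const (hcont.intervalIntegrable _ _),
      intervalIntegral.integral_const_mul, integral_id, intervalIntegral.integral_const]
    field_simp
    ring
  rw [← hlin]
  refine intervalIntegral.integral_mono_on hh.le
    ((by fun_prop : Continuous fun s : ℝ => 1 + s / h * (c - 1)).intervalIntegrable _ _)
    ((by fun_prop : Continuous fun s : ℝ => (1 + s / h * (c - 1)) ^ m).intervalIntegrable _ _)
    fun s hs => ?_
  have hx : 0 ≤ s / h * (c - 1) := mul_nonneg (div_nonneg hs.1 hh.le) (by linarith)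
  calc 1 + s / h * (c - 1) ≤ 1 + m * (s / h * (c - 1)) := by
        have hm1 : (1 : ℝ) ≤ m := by exact_mod_cast Nat.one_le_iff_ne_zero.2 hm
        linarith [le_mul_of_one_le_left hx hm1]
    _ ≤ (1 + s / h * (c - 1)) ^ m := one_add_mul_le_pow (by linarith) m

lemma exists_frustumVolume_eq_one (hm : m ≠ 0) (hh : 0 < h) (hh1 : h ≤ 1) :
    ∃ c, 1 ≤ c ∧ frustumVolume m h c = 1 := by
  have hc : 1 ≤ 2 / h := by rw [le_div_iff₀ hh]; linarith
  have hmem : (1 : ℝ) ∈ Icc (frustumVolume m h 1) (frustumVolume m h (2 / h)) := by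
    refine ⟨frustumVolume_one.trans_le hh1, le_trans ?_ (le_frustumVolume hm hh hc)⟩
    field_simp
    linarith
  obtain ⟨c, hc, hcV⟩ := intermediate_value_Icc hc continuous_frustumVolume.continuousOn hmem
  exact ⟨c, hc.1, hcV⟩

lemma IsCompact.frustum (hF : IsCompact F) : IsCompact (frustum h c F) :=
  isCompact_convexJoin hF.atHeight (hF.smul c).atHeight

lemma Convex.frustum (hFc : Convex ℝ F) : Convex ℝ (frustum h c F) :=
  hFc.atHeight.convexJoin (hFc.smul c).atHeight

lemma volume_frustum (hF : IsCompact F) (hFc : Convex ℝ F) (hh : 0 < h) (hc : 0 ≤ c) :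
    volume (frustum h c F) = ENNReal.ofReal (frustumVolume m h c) * volume F := by
  have hpos : ∀ s ∈ Icc 0 h, 0 ≤ 1 + s / h * (c - 1) := fun s hs => by
    have : s / h ≤ 1 := div_le_one_of_le₀ hs.2 hh.le
    nlinarith [div_nonneg hs.1 hh.le]
  rw [frustum, volume_convexJoin_atHeight hh hF (hF.smul c), frustumVolume,
    intervalIntegral.integral_of_le hh.le, ← integral_Icc_eq_integral_Ioc,
    ofReal_integral_eq_lintegral_ofReal (Continuous.integrableOn_Icc (by fun_prop))
      ((ae_restrict_iff' measurableSet_Icc).2 (.of_forall fun s hs => pow_nonneg (hpos s hs) m)),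
    ← lintegral_mul_const _ (by fun_prop)]
  refine setLIntegral_congr_fun measurableSet_Icc fun s hs => ?_
  have hs0 : 0 ≤ s / h := div_nonneg hs.1 hh.le
  rw [smul_smul, ← hFc.add_smul (by linarith [div_le_one_of_le₀ hs.2 hh.le]) (by positivity),
    Measure.addHaar_smul, Module.finrank_fin_fun, abs_of_nonneg]
  · ring_nf
  · rw [show 1 - s / h + s / h * c = 1 + s / h * (c - 1) by ring]
    exact pow_nonneg (hpos s hs) m

lemma hasFloor_frustum (hFne : F.Nonempty) (hh : 0 < h) : HasFloor m F (frustum h c F) :=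
  hasFloor_convexJoin_atHeight hh hFne.smul_set

end Frustum

lemma measure_prod_union_swap_le {α : Type*} [MeasurableSpace α] (ρ : Measure α)
    [IsProbabilityMeasure ρ] {R : Set (α × α)} (hR : MeasurableSet R) {ε : ENNReal}
    (hε : ∀ x, ρ (Prod.mk x ⁻¹' R) ≤ ε) : (ρ.prod ρ) (R ∪ Prod.swap ⁻¹' R) ≤ 2 * ε := by
  have hRε : (ρ.prod ρ) R ≤ ε := by
    rw [Measure.prod_apply hR]
    calc ∫⁻ x, ρ (Prod.mk x ⁻¹' R) ∂ρ ≤ ∫⁻ _, ε ∂ρ := lintegral_mono hε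
      _ = ε := by simp
  calc (ρ.prod ρ) (R ∪ Prod.swap ⁻¹' R) ≤ (ρ.prod ρ) R + (ρ.prod ρ) (Prod.swap ⁻¹' R) :=
        measure_union_le _ _
    _ = (ρ.prod ρ) R + (ρ.prod ρ) R := by
        rw [(Measure.measurePreserving_swap (μ := ρ) (ν := ρ)).measure_preimage
          hR.nullMeasurableSet]
    _ ≤ 2 * ε := by rw [two_mul]; gcongr

lemma mem_frontier_convexHull_pair_union_floorEmb {m : ℕ} {F : Set (Fin m → ℝ)}
    (hF : IsCompact F) (hFc : Convex ℝ F) (hFne : F.Nonempty) {x y : Fin (m + 1) → ℝ}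
    (hx : x ∉ convexJoin ℝ {y} (floorEmb m F)) :
    x ∈ frontier (convexHull ℝ ({x, y} ∪ floorEmb m F)) := by
  rw [← convexHull_insert_floorEmb hFc hFne] at hx
  rw [insert_union, singleton_union]
  refine mem_frontier_convexHull_insert (insert_nonempty _ _) ?_ hx
  rw [convexHull_insert_floorEmb hFc hFne]
  exact (isCompact_convexJoin isCompact_singleton hF.atHeight).isClosed

lemma one_sub_le_Qtwo {m : ℕ} {F : Set (Fin m → ℝ)} (hF : IsCompact F) (hFc : Convex ℝ F)
    (hFne : F.Nonempty) {K : Set (Fin (m + 1) → ℝ)} (hK : IsCompact K) (hKvol : volume K = 1)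
    {h : ℝ} (hh : 0 ≤ h) (hKh : ∀ x ∈ K, x (Fin.last m) ∈ Icc 0 h) :
    1 - 2 * (volume F).toReal * h ≤ Qtwo m F K := by
  let ρ := volume.restrict K
  have : IsProbabilityMeasure ρ := ⟨by simp [ρ, hKvol]⟩
  let R := {p : (Fin (m + 1) → ℝ) × (Fin (m + 1) → ℝ) |
    p.1 ∈ K ∧ p.2 ∈ convexJoin ℝ {p.1} (floorEmb m F)}
  have hR : IsCompact R := isCompact_setOf_mem_convexJoin_singleton hK hF.atHeight
  have hslice : ∀ x, ρ (Prod.mk x ⁻¹' R) ≤ volume F * ENNReal.ofReal h := by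
    intro x
    by_cases hx : x ∈ K
    · calc ρ (Prod.mk x ⁻¹' R) ≤ volume (convexJoin ℝ {x} (floorEmb m F)) :=
            (Measure.restrict_le_self _).trans (measure_mono fun y hy => hy.2)
        _ ≤ volume F * ENNReal.ofReal (x (Fin.last m)) :=
            volume_convexJoin_floorEmb_le hF hFc hFne (hKh x hx).1
        _ ≤ volume F * ENNReal.ofReal h := by gcongr; exact (hKh x hx).2
    · convert zero_le (a := volume F * ENNReal.ofReal h)
      exact measure_mono_null (fun y hy => hx hy.1) measure_empty
  have hbad := measure_prod_union_swap_le ρ hR.measurableSet hslice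
  have hgood : K ×ˢ K \ (R ∪ Prod.swap ⁻¹' R) ⊆ {p |
      p.1 ∈ frontier (convexHull ℝ ({p.1, p.2} ∪ floorEmb m F)) ∧
      p.2 ∈ frontier (convexHull ℝ ({p.1, p.2} ∪ floorEmb m F))} := by
    rintro ⟨x, y⟩ ⟨⟨hx, hy⟩, hxy⟩
    simp only [mem_union, mem_preimage, Prod.swap_prod_mk, not_or] at hxy
    refine ⟨mem_frontier_convexHull_pair_union_floorEmb hF hFc hFne fun h => hxy.2 ⟨hy, h⟩, ?_⟩
    rw [pair_comm]
    exact mem_frontier_convexHull_pair_union_floorEmb hF hFc hFne fun h => hxy.1 ⟨hx, h⟩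
  have hKK : (ρ.prod ρ).real (K ×ˢ K) = 1 := by
    simp [measureReal_def, Measure.prod_prod, ρ, hKvol]
  have hbad' : (ρ.prod ρ).real (R ∪ Prod.swap ⁻¹' R) ≤ 2 * (volume F).toReal * h := by
    have hFfin : volume F ≠ ⊤ := hF.measure_lt_top.ne
    calc (ρ.prod ρ).real (R ∪ Prod.swap ⁻¹' R) ≤ (2 * (volume F * ENNReal.ofReal h)).toReal :=
          ENNReal.toReal_mono (by finiteness) hbad
      _ = 2 * (volume F).toReal * h := by simp [hh, mul_assoc]
  calc 1 - 2 * (volume F).toReal * h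
      ≤ (ρ.prod ρ).real (K ×ˢ K) - (ρ.prod ρ).real (R ∪ Prod.swap ⁻¹' R) := by linarith
    _ ≤ (ρ.prod ρ).real (K ×ˢ K \ (R ∪ Prod.swap ⁻¹' R)) := le_measureReal_sdiff
    _ ≤ Qtwo m F K := measureReal_mono hgood

/-- For every `α > 0` there is a compact convex `K` with floor `F` and volume `1`
such that `Q_K(2) ≥ 1 - α`. -/
theorem stmt5 (m : ℕ) (hm : 1 ≤ m) (F : Set (Fin m → ℝ))
    (hFcomp : IsCompact F) (hFconv : Convex ℝ F) (hFvol : volume F = 1)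
    (α : ℝ) (hα : 0 < α) :
    ∃ K : Set (Fin (m + 1) → ℝ), IsCompact K ∧ Convex ℝ K ∧ HasFloor m F K ∧
      volume K = 1 ∧ 1 - α ≤ Qtwo m F K := by
  have hFne : F.Nonempty := nonempty_of_measure_ne_zero (μ := volume) (by simp [hFvol])
  obtain ⟨h, hh, hh1, hhα⟩ : ∃ h : ℝ, 0 < h ∧ h ≤ 1 ∧ 2 * h ≤ α :=
    ⟨min 1 (α / 2), by positivity, min_le_left _ _, by linarith [min_le_right 1 (α / 2)]⟩
  obtain ⟨c, hc, hcV⟩ := exists_frustumVolume_eq_one (m := m) (by omega) hh hh1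
  have hKvol : volume (frustum h c F) = 1 := by
    rw [volume_frustum hFcomp hFconv hh (by linarith), hcV, hFvol, ENNReal.ofReal_one, one_mul]
  refine ⟨frustum h c F, hFcomp.frustum, hFconv.frustum, hasFloor_frustum hFne hh, hKvol, ?_⟩
  have hQ := one_sub_le_Qtwo hFcomp hFconv hFne hFcomp.frustum hKvol hh.le
    fun x hx => last_mem_Icc_of_mem_convexJoin_atHeight hh.le hx
  rw [hFvol, ENNReal.toReal_one, mul_one] at hQ
  linarith

end
end
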